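/- arXiv:1506.06330 — 2 statements merged into one kernel-verified Lean document; each statement's English description precedes it below -/
import Mathlib

section
/- Let f_m(t;p) = Σ_{j=0}^m p_j β_{m,j}(t) and f_m(t;p_0) = Σ_{j=0}^m p_{0,j} β_{m,j}(t) with p, p_0 in the m-simplex and f_m(t;p_0) ≥ δ' > 0 on [0,1]. Then ψ_m(t) = (f_m(t;p) − f_m(t;p_0))^2 / f_m(t;p_0) satisfies sup_{t∈[0,1]} |ψ''_m(t)| ≤ C·m^4 for a constant C depending only on δ' and upper bounds for the densities. -/
/-- The Bernstein–beta density `β_{m,j}`. -/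
def bePoly (m j : ℕ) (t : ℝ) : ℝ :=
  ((m : ℝ) + 1) * (Nat.choose m j) * t ^ j * (1 - t) ^ (m - j)

open Polynomial

section Aux

lemma bern_eval_nonneg (n ν : ℕ) {t : ℝ} (h0 : 0 ≤ t) (h1 : t ≤ 1) :
    0 ≤ (bernsteinPolynomial ℝ n ν).eval t := by
  simp only [bernsteinPolynomial, eval_mul, eval_pow, eval_sub, eval_one, eval_X, eval_natCast]
  have : (0:ℝ) ≤ 1 - t := by linarith
  positivity

lemma bern_eval_le_one (n ν : ℕ) {t : ℝ} (h0 : 0 ≤ t) (h1 : t ≤ 1) :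
    (bernsteinPolynomial ℝ n ν).eval t ≤ 1 := by
  rcases le_or_gt ν n with h | h
  · have hsum : (∑ k ∈ Finset.range (n+1), (bernsteinPolynomial ℝ n k).eval t) = 1 := by
      rw [← Polynomial.eval_finset_sum, bernsteinPolynomial.sum, eval_one]
    calc (bernsteinPolynomial ℝ n ν).eval t
        ≤ ∑ k ∈ Finset.range (n+1), (bernsteinPolynomial ℝ n k).eval t :=
          Finset.single_le_sum (fun k _ => bern_eval_nonneg n k h0 h1)
            (Finset.mem_range.mpr (Nat.lt_succ_of_le h))
      _ = 1 := hsum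
  · simp [bernsteinPolynomial, Nat.choose_eq_zero_of_lt h]

lemma bern_deriv_abs_le (n ν : ℕ) {t : ℝ} (h0 : 0 ≤ t) (h1 : t ≤ 1) :
    |(derivative (bernsteinPolynomial ℝ n ν)).eval t| ≤ 2 * n := by
  have hn : (0:ℝ) ≤ n := Nat.cast_nonneg n
  cases ν with
  | zero =>
    rw [bernsteinPolynomial.derivative_zero]
    have e0 := bern_eval_nonneg (n-1) 0 h0 h1
    have e1 := bern_eval_le_one (n-1) 0 h0 h1
    simp only [eval_mul, eval_neg, eval_natCast, abs_mul, abs_neg, abs_of_nonneg hn,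
      abs_of_nonneg e0]
    nlinarith
  | succ k =>
    rw [bernsteinPolynomial.derivative_succ]
    have a0 := bern_eval_nonneg (n-1) k h0 h1
    have a1 := bern_eval_le_one (n-1) k h0 h1
    have b0 := bern_eval_nonneg (n-1) (k+1) h0 h1
    have b1 := bern_eval_le_one (n-1) (k+1) h0 h1
    simp only [eval_mul, eval_sub, eval_natCast, abs_mul, abs_of_nonneg hn]
    have : |(bernsteinPolynomial ℝ (n-1) k).eval t
        - (bernsteinPolynomial ℝ (n-1) (k+1)).eval t| ≤ 1 := by
      rw [abs_le]; constructor <;> linarith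
    nlinarith

lemma bern_deriv2_abs_le (n ν : ℕ) {t : ℝ} (h0 : 0 ≤ t) (h1 : t ≤ 1) :
    |(derivative (derivative (bernsteinPolynomial ℝ n ν))).eval t| ≤ 4 * n^2 := by
  have hn : (0:ℝ) ≤ n := Nat.cast_nonneg n
  have hle : ((n-1 : ℕ):ℝ) ≤ n := by exact_mod_cast Nat.cast_le.mpr (Nat.sub_le n 1)
  cases ν with
  | zero =>
    rw [bernsteinPolynomial.derivative_zero, derivative_mul, derivative_neg, derivative_natCast]
    have d1 := bern_deriv_abs_le (n-1) 0 h0 h1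
    simp only [neg_zero, zero_mul, zero_add, eval_mul, eval_neg, eval_natCast, abs_mul, abs_neg,
      abs_of_nonneg hn]
    nlinarith [abs_nonneg ((derivative (bernsteinPolynomial ℝ (n-1) 0)).eval t)]
  | succ k =>
    rw [bernsteinPolynomial.derivative_succ, derivative_mul, derivative_natCast, derivative_sub]
    have d1 := bern_deriv_abs_le (n-1) k h0 h1
    have d2 := bern_deriv_abs_le (n-1) (k+1) h0 h1
    simp only [zero_mul, zero_add, eval_mul, eval_sub, eval_natCast, abs_mul, abs_of_nonneg hn]
    have : |(derivative (bernsteinPolynomial ℝ (n-1) k)).eval t -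
        (derivative (bernsteinPolynomial ℝ (n-1) (k+1))).eval t| ≤ 2*n + 2*n := by
      refine (abs_sub _ _).trans ?_
      gcongr <;> [exact d1.trans (by nlinarith); exact d2.trans (by nlinarith)]
    nlinarith [abs_nonneg ((derivative (bernsteinPolynomial ℝ (n-1) k)).eval t -
        (derivative (bernsteinPolynomial ℝ (n-1) (k+1))).eval t)]

/-- The density polynomial `f_m(·;p)`. -/
noncomputable def Pp (m : ℕ) (p : Fin (m+1) → ℝ) : ℝ[X] :=
  ∑ j : Fin (m+1), Polynomial.C (p j * ((m:ℝ)+1)) * bernsteinPolynomial ℝ m (j : ℕ)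

lemma Pp_eval (m : ℕ) (p : Fin (m+1) → ℝ) (s : ℝ) :
    (Pp m p).eval s = ∑ j : Fin (m+1), p j * bePoly m (j:ℕ) s := by
  rw [Pp, Polynomial.eval_finset_sum]
  refine Finset.sum_congr rfl fun j _ => ?_
  simp only [eval_mul, eval_C, bePoly, bernsteinPolynomial, eval_pow, eval_sub, eval_one, eval_X,
    eval_natCast]
  ring

lemma weighted_abs_le (m : ℕ) (p : Fin (m+1) → ℝ) (hp : ∀ j, 0 ≤ p j) (hs : ∑ j, p j = 1)
    (g : Fin (m+1) → ℝ) (bd : ℝ) (hbd : ∀ j, |g j| ≤ bd) :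
    |∑ j : Fin (m+1), p j * g j| ≤ bd := by
  calc |∑ j : Fin (m+1), p j * g j| ≤ ∑ j : Fin (m+1), |p j * g j| :=
        Finset.abs_sum_le_sum_abs _ _
    _ ≤ ∑ j : Fin (m+1), p j * bd := by
        refine Finset.sum_le_sum fun j _ => ?_
        rw [abs_mul, abs_of_nonneg (hp j)]
        exact mul_le_mul_of_nonneg_left (hbd j) (hp j)
    _ = bd := by rw [← Finset.sum_mul, hs, one_mul]

lemma Pp_eval_nonneg (m : ℕ) (p : Fin (m+1) → ℝ) (hp : ∀ j, 0 ≤ p j)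
    {t : ℝ} (h0 : 0 ≤ t) (h1 : t ≤ 1) : 0 ≤ (Pp m p).eval t := by
  rw [Pp_eval]
  refine Finset.sum_nonneg fun j _ => mul_nonneg (hp j) ?_
  have h1t : (0:ℝ) ≤ 1 - t := by linarith
  unfold bePoly
  positivity

lemma Pp_deriv_abs_le (m : ℕ) (p : Fin (m+1) → ℝ) (hp : ∀ j, 0 ≤ p j) (hs : ∑ j, p j = 1)
    {t : ℝ} (h0 : 0 ≤ t) (h1 : t ≤ 1) :
    |(derivative (Pp m p)).eval t| ≤ 2 * ((m:ℝ) * ((m:ℝ)+1)) := by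
  have hev : (derivative (Pp m p)).eval t
      = ∑ j : Fin (m+1), p j *
        (((m:ℝ)+1) * (derivative (bernsteinPolynomial ℝ m (j:ℕ))).eval t) := by
    rw [Pp, map_sum, Polynomial.eval_finset_sum]
    refine Finset.sum_congr rfl fun j _ => ?_
    rw [derivative_C_mul, eval_mul, eval_C]; ring
  rw [hev]
  have := weighted_abs_le m p hp hs
    (fun j => ((m:ℝ)+1) * (derivative (bernsteinPolynomial ℝ m (j:ℕ))).eval t)
    (((m:ℝ)+1) * (2 * m))
    (fun j => by
      rw [abs_mul, abs_of_nonneg (by positivity : (0:ℝ) ≤ (m:ℝ)+1)]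
      exact mul_le_mul_of_nonneg_left (bern_deriv_abs_le m (j:ℕ) h0 h1) (by positivity))
  calc _ ≤ ((m:ℝ)+1) * (2 * m) := this
    _ = 2 * ((m:ℝ) * ((m:ℝ)+1)) := by ring

lemma Pp_deriv2_abs_le (m : ℕ) (p : Fin (m+1) → ℝ) (hp : ∀ j, 0 ≤ p j) (hs : ∑ j, p j = 1)
    {t : ℝ} (h0 : 0 ≤ t) (h1 : t ≤ 1) :
    |(derivative (derivative (Pp m p))).eval t| ≤ 4 * (m:ℝ) * ((m:ℝ) * ((m:ℝ)+1)) := by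
  have hev : (derivative (derivative (Pp m p))).eval t
      = ∑ j : Fin (m+1), p j *
        (((m:ℝ)+1) * (derivative (derivative (bernsteinPolynomial ℝ m (j:ℕ)))).eval t) := by
    rw [Pp, map_sum, map_sum, Polynomial.eval_finset_sum]
    refine Finset.sum_congr rfl fun j _ => ?_
    rw [derivative_C_mul, derivative_C_mul, eval_mul, eval_C]; ring
  rw [hev]
  have := weighted_abs_le m p hp hs
    (fun j => ((m:ℝ)+1) * (derivative (derivative (bernsteinPolynomial ℝ m (j:ℕ)))).eval t)
    (((m:ℝ)+1) * (4 * (m:ℝ)^2))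
    (fun j => by
      rw [abs_mul, abs_of_nonneg (by positivity : (0:ℝ) ≤ (m:ℝ)+1)]
      exact mul_le_mul_of_nonneg_left (bern_deriv2_abs_le m (j:ℕ) h0 h1) (by positivity))
  calc _ ≤ ((m:ℝ)+1) * (4 * (m:ℝ)^2) := this
    _ = 4 * (m:ℝ) * ((m:ℝ) * ((m:ℝ)+1)) := by ring

lemma amul {x y bx cy : ℝ} (hx : |x| ≤ bx) (hy : |y| ≤ cy) : |x * y| ≤ bx * cy := by
  rw [abs_mul]
  exact mul_le_mul hx hy (abs_nonneg _) ((abs_nonneg _).trans hx)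

lemma num_bound (a K M q q1 q2 h h1 h2 : ℝ)
    (ha : 1 ≤ a) (hK : 0 ≤ K) (hM : 0 ≤ M) (hMK : M * K ≤ K^2)
    (bq : |q| ≤ a) (bh : |h| ≤ a) (bq1 : |q1| ≤ 4*K) (bh1 : |h1| ≤ 2*K)
    (bq2 : |q2| ≤ 8*(M*K)) (bh2 : |h2| ≤ 4*(M*K)) :
    |((2*q1*q1 + 2*q*q2)*(h*(h*h)) - (q*q)*(h2*(h*h)))
      - (2*((2*q*(q1*h)) - q*(q*h1)))*(h1*h)| ≤ 92 * a^4 * K^2 := by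
  have ha0 : (0:ℝ) ≤ a := by linarith
  have b1 : |2*q1*q1 + 2*q*q2| ≤ 2*(4*K)*(4*K) + 2*a*(8*(M*K)) := by
    refine (abs_add_le _ _).trans ?_
    have e1 : (2:ℝ)*q1*q1 = (2*q1)*q1 := by ring
    have e2 : (2:ℝ)*q*q2 = (2*q)*q2 := by ring
    rw [e1, e2]
    have h2q1 : |(2:ℝ)*q1| ≤ 2*(4*K) := by rw [abs_mul, abs_two]; linarith
    have h2q : |(2:ℝ)*q| ≤ 2*a := by rw [abs_mul, abs_two]; linarith
    exact add_le_add (amul h2q1 bq1) (amul h2q bq2)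
  have bh3 : |h*(h*h)| ≤ a*(a*a) := amul bh (amul bh bh)
  have bX1 : |(2*q1*q1 + 2*q*q2)*(h*(h*h))| ≤ (2*(4*K)*(4*K) + 2*a*(8*(M*K)))*(a*(a*a)) :=
    amul b1 bh3
  have bX2 : |(q*q)*(h2*(h*h))| ≤ (a*a)*((4*(M*K))*(a*a)) :=
    amul (amul bq bq) (amul bh2 (amul bh bh))
  have binner : |(2*q*(q1*h)) - q*(q*h1)| ≤ 2*a*((4*K)*a) + a*(a*(2*K)) := by
    refine (abs_sub _ _).trans ?_
    have e1 : (2:ℝ)*q*(q1*h) = (2*q)*(q1*h) := by ring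
    rw [e1]
    have h2q : |(2:ℝ)*q| ≤ 2*a := by rw [abs_mul, abs_two]; linarith
    exact add_le_add (amul h2q (amul bq1 bh)) (amul bq (amul bq bh1))
  have bX3 : |(2*((2*q*(q1*h)) - q*(q*h1)))*(h1*h)|
      ≤ (2*(2*a*((4*K)*a) + a*(a*(2*K))))*((2*K)*a) := by
    refine amul ?_ (amul bh1 bh)
    rw [abs_mul, abs_two]
    linarith [abs_nonneg ((2*q*(q1*h)) - q*(q*h1))]
  have tri : |((2*q1*q1 + 2*q*q2)*(h*(h*h)) - (q*q)*(h2*(h*h)))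
      - (2*((2*q*(q1*h)) - q*(q*h1)))*(h1*h)|
      ≤ |(2*q1*q1 + 2*q*q2)*(h*(h*h))| + |(q*q)*(h2*(h*h))|
        + |(2*((2*q*(q1*h)) - q*(q*h1)))*(h1*h)| := by
    calc _ ≤ |(2*q1*q1 + 2*q*q2)*(h*(h*h)) - (q*q)*(h2*(h*h))|
          + |(2*((2*q*(q1*h)) - q*(q*h1)))*(h1*h)| := abs_sub _ _
      _ ≤ _ := by linarith [abs_sub ((2*q1*q1 + 2*q*q2)*(h*(h*h))) ((q*q)*(h2*(h*h)))]
  refine tri.trans ?_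
  have ha3 : a^3 ≤ a^4 := by nlinarith [mul_nonneg (mul_nonneg ha0 ha0) ha0]
  have hKey : a^4*(M*K) ≤ a^4*K^2 :=
    mul_le_mul_of_nonneg_left hMK (by positivity)
  have h3K : a^3*K^2 ≤ a^4*K^2 :=
    mul_le_mul_of_nonneg_right ha3 (by positivity)
  calc |(2*q1*q1 + 2*q*q2)*(h*(h*h))| + |(q*q)*(h2*(h*h))|
        + |(2*((2*q*(q1*h)) - q*(q*h1)))*(h1*h)|
      ≤ (2*(4*K)*(4*K) + 2*a*(8*(M*K)))*(a*(a*a)) + (a*a)*((4*(M*K))*(a*a))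
        + (2*(2*a*((4*K)*a) + a*(a*(2*K))))*((2*K)*a) := by linarith
    _ ≤ 92 * a^4 * K^2 := by nlinarith [h3K, hKey]


lemma second_deriv_eval (Q H : ℝ[X]) (t : ℝ) (ht : 0 < H.eval t) :
    deriv (deriv (fun s => (Q.eval s)^2 / H.eval s)) t =
      ((derivative (derivative (Q*Q) * H - (Q*Q) * derivative H)).eval t * (H*H).eval t
        - (derivative (Q*Q) * H - (Q*Q) * derivative H).eval t * (derivative (H*H)).eval t)
        / ((H*H).eval t)^2 := by
  have hU : IsOpen {s : ℝ | 0 < H.eval s} := isOpen_lt continuous_const H.continuous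
  have key : ∀ s ∈ {s : ℝ | 0 < H.eval s},
      HasDerivAt (fun y => (Q.eval y)^2 / H.eval y)
        ((derivative (Q*Q) * H - (Q*Q) * derivative H).eval s / (H*H).eval s) s := by
    intro s hs
    have hne : H.eval s ≠ 0 := ne_of_gt hs
    have hder := ((Q*Q).hasDerivAt s).div (H.hasDerivAt s) hne
    have hψ : (fun y => (Q.eval y)^2 / H.eval y) = fun y => (Q*Q).eval y / H.eval y := by
      funext y; rw [eval_mul, sq]
    rw [hψ]
    refine hder.congr_deriv ?_
    simp only [eval_sub, eval_mul]
    ring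
  have hEq : deriv (fun y => (Q.eval y)^2 / H.eval y)
      =ᶠ[nhds t] fun s => (derivative (Q*Q) * H - (Q*Q) * derivative H).eval s / (H*H).eval s :=
    Filter.eventuallyEq_of_mem (hU.mem_nhds ht) (fun s hs => (key s hs).deriv)
  have hne2 : (H*H).eval t ≠ 0 := by rw [eval_mul]; exact ne_of_gt (mul_pos ht ht)
  have hd2 := ((derivative (Q*Q) * H - (Q*Q) * derivative H).hasDerivAt t).div
    ((H*H).hasDerivAt t) hne2
  rw [hEq.deriv_eq]; exact hd2.deriv

lemma num_eval (Q H : ℝ[X]) (t : ℝ) :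
    (derivative (derivative (Q*Q) * H - (Q*Q) * derivative H)).eval t * (H*H).eval t
      - (derivative (Q*Q) * H - (Q*Q) * derivative H).eval t * (derivative (H*H)).eval t
    = (((2*((derivative Q).eval t)*((derivative Q).eval t)
          + 2*(Q.eval t)*((derivative (derivative Q)).eval t))
            *((H.eval t)*((H.eval t)*(H.eval t)))
        - ((Q.eval t)*(Q.eval t))
            *(((derivative (derivative H)).eval t)*((H.eval t)*(H.eval t))))
      - (2*((2*(Q.eval t)*(((derivative Q).eval t)*(H.eval t)))
          - (Q.eval t)*((Q.eval t)*((derivative H).eval t))))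
            *(((derivative H).eval t)*(H.eval t))) := by
  simp only [derivative_sub, derivative_add, derivative_mul, eval_add, eval_sub, eval_mul]
  ring

end Aux

set_option maxHeartbeats 1600000 in
/-- With `ψ_m(t) = (f_m(t;p) − f_m(t;p_0))²/f_m(t;p_0)`, `f_m(·;p_0) ≥ δ' > 0` and both
densities bounded by `M_0`, one has `sup_{[0,1]} |ψ''_m| ≤ C m⁴` for a constant `C`
depending only on `δ'` and `M_0`. -/
theorem psi_second_deriv_bound (δ' M0 : ℝ) (hδ : 0 < δ') :
    ∃ C : ℝ, 0 < C ∧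
      ∀ (m : ℕ) (p p0 : Fin (m + 1) → ℝ),
        (∀ j, 0 ≤ p j) → (∑ j, p j = 1) → (∀ j, 0 ≤ p0 j) → (∑ j, p0 j = 1) →
        (∀ t ∈ Set.Icc (0:ℝ) 1, δ' ≤ ∑ j : Fin (m + 1), p0 j * bePoly m (j : ℕ) t) →
        (∀ t ∈ Set.Icc (0:ℝ) 1, (∑ j : Fin (m + 1), p j * bePoly m (j : ℕ) t) ≤ M0) →
        (∀ t ∈ Set.Icc (0:ℝ) 1, (∑ j : Fin (m + 1), p0 j * bePoly m (j : ℕ) t) ≤ M0) →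
        ∀ t ∈ Set.Icc (0:ℝ) 1,
          |deriv (deriv (fun s =>
              ((∑ j : Fin (m + 1), p j * bePoly m (j : ℕ) s) -
                ∑ j : Fin (m + 1), p0 j * bePoly m (j : ℕ) s) ^ 2 /
                (∑ j : Fin (m + 1), p0 j * bePoly m (j : ℕ) s))) t| ≤
            C * (m : ℝ) ^ 4 := by
  set a : ℝ := max M0 1 with ha_def
  have ha1 : (1:ℝ) ≤ a := le_max_right _ _
  have ha0 : (0:ℝ) < a := lt_of_lt_of_le one_pos ha1
  refine ⟨368 * a^4 / δ'^4 + 1, by positivity, ?_⟩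
  intro m p p0 hp hps hp0 hp0s hlow hup hup0 t ht
  obtain ⟨ht0, ht1⟩ := ht
  have hfun : (fun s =>
      ((∑ j : Fin (m + 1), p j * bePoly m (j : ℕ) s) -
        ∑ j : Fin (m + 1), p0 j * bePoly m (j : ℕ) s) ^ 2 /
        (∑ j : Fin (m + 1), p0 j * bePoly m (j : ℕ) s))
      = fun s => (((Pp m p - Pp m p0)).eval s)^2 / (Pp m p0).eval s := by
    funext s
    simp only [eval_sub, Pp_eval]
  rw [hfun]
  have hHt : δ' ≤ (Pp m p0).eval t := by rw [Pp_eval]; exact hlow t ⟨ht0, ht1⟩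
  have hHt0 : 0 < (Pp m p0).eval t := lt_of_lt_of_le hδ hHt
  set K : ℝ := (m:ℝ) * ((m:ℝ)+1) with hKdef
  have hK0 : (0:ℝ) ≤ K := by positivity
  have hm0 : (0:ℝ) ≤ (m:ℝ) := Nat.cast_nonneg m
  have hMK : (m:ℝ) * K ≤ K^2 := by rw [hKdef]; nlinarith
  have hK4 : K^2 ≤ 4 * (m:ℝ)^4 := by
    rcases Nat.eq_zero_or_pos m with hm | hm
    · subst hm; simp [hKdef]
    · have hm1 : (1:ℝ) ≤ (m:ℝ) := by exact_mod_cast hm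
      have hmm : (0:ℝ) ≤ (m:ℝ)*(m:ℝ)*((m:ℝ)-1)*(3*(m:ℝ)+1) :=
        mul_nonneg (mul_nonneg (mul_nonneg hm0 hm0) (by linarith)) (by linarith)
      rw [hKdef]; nlinarith [hmm]
  -- eval bounds
  have hFp : 0 ≤ (Pp m p).eval t := Pp_eval_nonneg m p hp ht0 ht1
  have hFp0 : 0 ≤ (Pp m p0).eval t := Pp_eval_nonneg m p0 hp0 ht0 ht1
  have hFpM : (Pp m p).eval t ≤ M0 := by rw [Pp_eval]; exact hup t ⟨ht0, ht1⟩
  have hFp0M : (Pp m p0).eval t ≤ M0 := by rw [Pp_eval]; exact hup0 t ⟨ht0, ht1⟩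
  have hM0a : M0 ≤ a := le_max_left _ _
  have bq : |(Pp m p - Pp m p0).eval t| ≤ a := by
    rw [eval_sub, abs_le]
    constructor <;> nlinarith
  have bh : |(Pp m p0).eval t| ≤ a := by
    rw [abs_le]; constructor <;> nlinarith
  have bq1 : |(derivative (Pp m p - Pp m p0)).eval t| ≤ 4*K := by
    rw [derivative_sub, eval_sub]
    have h1 := Pp_deriv_abs_le m p hp hps ht0 ht1
    have h2 := Pp_deriv_abs_le m p0 hp0 hp0s ht0 ht1
    refine (abs_sub _ _).trans ?_
    rw [← hKdef] at h1 h2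
    linarith
  have bh1 : |(derivative (Pp m p0)).eval t| ≤ 2*K := by
    have := Pp_deriv_abs_le m p0 hp0 hp0s ht0 ht1
    rw [← hKdef] at this; linarith
  have bq2 : |(derivative (derivative (Pp m p - Pp m p0))).eval t| ≤ 8*((m:ℝ)*K) := by
    rw [derivative_sub, derivative_sub, eval_sub]
    have h1 := Pp_deriv2_abs_le m p hp hps ht0 ht1
    have h2 := Pp_deriv2_abs_le m p0 hp0 hp0s ht0 ht1
    refine (abs_sub _ _).trans ?_
    rw [← hKdef] at h1 h2
    linarith
  have bh2 : |(derivative (derivative (Pp m p0))).eval t| ≤ 4*((m:ℝ)*K) := by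
    have := Pp_deriv2_abs_le m p0 hp0 hp0s ht0 ht1
    rw [← hKdef] at this; linarith
  rw [second_deriv_eval (Pp m p - Pp m p0) (Pp m p0) t hHt0, num_eval]
  have hden : (Pp m p0 * Pp m p0).eval t = (Pp m p0).eval t * (Pp m p0).eval t := eval_mul
  rw [hden]
  have hNb := num_bound a K (m:ℝ) ((Pp m p - Pp m p0).eval t)
    ((derivative (Pp m p - Pp m p0)).eval t)
    ((derivative (derivative (Pp m p - Pp m p0))).eval t)
    ((Pp m p0).eval t) ((derivative (Pp m p0)).eval t)
    ((derivative (derivative (Pp m p0))).eval t)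
    ha1 hK0 hm0 hMK bq bh bq1 bh1 bq2 bh2
  have hdenpos : (0:ℝ) < ((Pp m p0).eval t * (Pp m p0).eval t)^2 := by positivity
  have hden4 : δ'^4 ≤ ((Pp m p0).eval t * (Pp m p0).eval t)^2 := by
    have h2 : δ'^2 ≤ (Pp m p0).eval t * (Pp m p0).eval t := by nlinarith
    calc δ'^4 = (δ'^2)^2 := by ring
      _ ≤ ((Pp m p0).eval t * (Pp m p0).eval t)^2 :=
          pow_le_pow_left₀ (by positivity) h2 2
  rw [abs_div, abs_of_pos hdenpos]
  calc _ ≤ (92 * a^4 * K^2) / δ'^4 :=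
        div_le_div₀ (by positivity) hNb (by positivity) hden4
    _ ≤ 368 * a^4 * (m:ℝ)^4 / δ'^4 := by
        apply div_le_div₀ (by positivity) ?_ (by positivity) le_rfl
        nlinarith [mul_le_mul_of_nonneg_left hK4 (show (0:ℝ) ≤ 92*a^4 by positivity)]
    _ ≤ (368 * a^4 / δ'^4 + 1) * (m:ℝ)^4 := by
        have hm4 : (0:ℝ) ≤ (m:ℝ)^4 := by positivity
        rw [add_mul, one_mul, div_mul_eq_mul_div]
        linarith
end

section
/- With ψ_m as above (f_m(·;p_0) ≥ δ' > 0, both densities bounded above by M_0'), there exist constants C_1, C_2 such that |ψ'_m(t)| ≤ m^2 (C_1 sqrt(ψ_m(t)) + C_2 ψ_m(t)) for all t ∈ [0,1]. -/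
lemma bern_le_one (n k : ℕ) {t : ℝ} (ht0 : 0 ≤ t) (ht1 : t ≤ 1) :
    (n.choose k : ℝ) * t ^ k * (1 - t) ^ (n - k) ≤ 1 := by
  rcases le_or_gt k n with h | h
  · have h1 : ((t + (1 - t)) : ℝ) ^ n = 1 := by norm_num
    have h2 := add_pow t (1 - t) n
    have h3 : ∀ i ∈ Finset.range (n + 1),
        0 ≤ t ^ i * (1 - t) ^ (n - i) * (n.choose i : ℝ) := by
      intro i _
      have : (0:ℝ) ≤ 1 - t := by linarith
      positivity
    have h4 := Finset.single_le_sum h3 (Finset.mem_range.2 (Nat.lt_succ_of_le h))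
    rw [← h2, h1] at h4
    linarith [h4]
  · simp [Nat.choose_eq_zero_of_lt h]


lemma bePoly_hasDerivAt (m j : ℕ) (t : ℝ) :
    HasDerivAt (bePoly m j)
      (((m:ℝ)+1) * (m.choose j) *
        ((j:ℝ) * t^(j-1) * (1-t)^(m-j) - ((m-j : ℕ):ℝ) * t^j * (1-t)^(m-j-1))) t := by
  have h1 : HasDerivAt (fun s : ℝ => s ^ j) ((j:ℝ) * t^(j-1)) t := hasDerivAt_pow j t
  have h2 : HasDerivAt (fun s : ℝ => (1 - s) ^ (m-j)) (-(((m-j:ℕ):ℝ) * (1-t)^(m-j-1))) t := by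
    have h := (hasDerivAt_pow (m-j) (1-t)).comp t ((hasDerivAt_const t (1:ℝ)).sub (hasDerivAt_id t))
    simp at h; exact h
  have h3 := (h1.mul h2).const_mul (((m:ℝ)+1) * (m.choose j))
  have : bePoly m j = fun s : ℝ => ((m:ℝ)+1) * (m.choose j) * (s ^ j * (1 - s) ^ (m-j)) := by
    funext s; unfold bePoly; ring
  rw [this]
  exact h3.congr_deriv (by ring)

lemma bePoly_deriv_bound (m j : ℕ) {t : ℝ} (ht0 : 0 ≤ t) (ht1 : t ≤ 1) :
    |(((m:ℝ)+1) * (m.choose j) *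
        ((j:ℝ) * t^(j-1) * (1-t)^(m-j) - ((m-j : ℕ):ℝ) * t^j * (1-t)^(m-j-1)))| ≤
      2 * m * (m + 1) := by
  have h1t : (0:ℝ) ≤ 1 - t := by linarith
  have ha : (0:ℝ) ≤ ((m:ℝ)+1) * (m.choose j) * ((j:ℝ) * t^(j-1) * (1-t)^(m-j)) := by positivity
  have hb : (0:ℝ) ≤ ((m:ℝ)+1) * (m.choose j) * (((m-j : ℕ):ℝ) * t^j * (1-t)^(m-j-1)) := by positivity
  have hA : ((m:ℝ)+1) * (m.choose j) * ((j:ℝ) * t^(j-1) * (1-t)^(m-j)) ≤ m * (m+1) := by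
    rcases Nat.eq_zero_or_pos j with hj | hj
    · subst hj; simp; positivity
    rcases le_or_gt j m with hjm | hjm
    · have hm : 1 ≤ m := le_trans hj hjm
      have hid : (m.choose j : ℝ) * j = m * ((m-1).choose (j-1)) := by
        have h := Nat.add_one_mul_choose_eq (m-1) (j-1)
        rw [Nat.sub_add_cancel hm,
          Nat.sub_add_cancel hj] at h
        exact_mod_cast h.symm
      have hsub : m - j = (m-1) - (j-1) := by omega
      have hber := bern_le_one (m-1) (j-1) ht0 ht1
      calc ((m:ℝ)+1) * (m.choose j) * ((j:ℝ) * t^(j-1) * (1-t)^(m-j))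
          = ((m:ℝ)+1) * m * (((m-1).choose (j-1) : ℝ) * t^(j-1) * (1-t)^((m-1)-(j-1))) := by
            rw [← hsub]
            linear_combination (((m:ℝ)+1) * t^(j-1) * (1-t)^(m-j)) * hid
        _ ≤ ((m:ℝ)+1) * m * 1 := mul_le_mul_of_nonneg_left hber (by positivity)
        _ = m * (m+1) := by ring
    · simp [Nat.choose_eq_zero_of_lt hjm]; positivity
  have hB : ((m:ℝ)+1) * (m.choose j) * (((m-j : ℕ):ℝ) * t^j * (1-t)^(m-j-1)) ≤ m * (m+1) := by
    rcases le_or_gt m j with hjm | hjm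
    · have h0 : m - j = 0 := by omega
      simp [h0]; positivity
    · have hm : 1 ≤ m := by omega
      have hid : (m.choose j : ℝ) * ((m-j : ℕ):ℝ) = m * ((m-1).choose j) := by
        have h1 := Nat.choose_succ_right_eq m j
        have h2 := Nat.add_one_mul_choose_eq (m-1) j
        rw [Nat.sub_add_cancel hm] at h2
        have h3 : m.choose j * (m - j) = m * ((m-1).choose j) := by omega
        exact_mod_cast h3
      have hsub : m - j - 1 = (m-1) - j := by omega
      have hber := bern_le_one (m-1) j ht0 ht1
      calc ((m:ℝ)+1) * (m.choose j) * (((m-j : ℕ):ℝ) * t^j * (1-t)^(m-j-1))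
          = ((m:ℝ)+1) * m * (((m-1).choose j : ℝ) * t^j * (1-t)^((m-1)-j)) := by
            rw [← hsub]
            linear_combination (((m:ℝ)+1) * t^j * (1-t)^(m-j-1)) * hid
        _ ≤ ((m:ℝ)+1) * m * 1 := mul_le_mul_of_nonneg_left hber (by positivity)
        _ = m * (m+1) := by ring
  rw [abs_le]
  constructor <;> nlinarith

lemma final_bound (δ' f0 gt g' f0' M : ℝ) (hδ : 0 < δ') (hf0 : δ' ≤ f0)
    (hM : 0 ≤ M) (hg' : |g'| ≤ 8 * M) (hf0' : |f0'| ≤ 4 * M) :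
    |(2 * gt * g' * f0 - gt ^ 2 * f0') / f0 ^ 2| ≤
      M * (16 / Real.sqrt δ' * Real.sqrt (gt ^ 2 / f0) + 4 / δ' * (gt ^ 2 / f0)) := by
  have hf0pos : 0 < f0 := lt_of_lt_of_le hδ hf0
  set s := Real.sqrt f0 with hs
  set sδ := Real.sqrt δ' with hsδ
  have hspos : 0 < s := Real.sqrt_pos.2 hf0pos
  have hsδpos : 0 < sδ := Real.sqrt_pos.2 hδ
  have hsle : sδ ≤ s := Real.sqrt_le_sqrt hf0
  have hs2 : s ^ 2 = f0 := Real.sq_sqrt hf0pos.le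
  have hsqrt : Real.sqrt (gt ^ 2 / f0) = |gt| / s := by
    rw [Real.sqrt_div (sq_nonneg gt) f0, Real.sqrt_sq_eq_abs]
  rw [hsqrt, abs_div, abs_of_nonneg (by positivity : (0:ℝ) ≤ f0 ^ 2),
    div_le_iff₀ (by positivity)]
  have hRHS : (M * (16 / sδ * (|gt| / s) + 4 / δ' * (gt ^ 2 / f0))) * f0 ^ 2
      = 16 * M * |gt| * (s ^ 3 / sδ) + 4 * M * gt ^ 2 * (f0 / δ') := by
    rw [← hs2]; field_simp
  rw [hRHS]
  have hgt0 : (0:ℝ) ≤ |gt| := abs_nonneg gt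
  have h1 : |2 * gt * g' * f0 - gt ^ 2 * f0'| ≤ 16 * M * |gt| * f0 + 4 * M * gt ^ 2 := by
    calc |2 * gt * g' * f0 - gt ^ 2 * f0'|
        ≤ |2 * gt * g' * f0| + |gt ^ 2 * f0'| := abs_sub _ _
      _ = 2 * |gt| * |g'| * f0 + gt ^ 2 * |f0'| := by
          rw [abs_mul, abs_mul, abs_mul, abs_mul]
          simp [abs_of_nonneg hf0pos.le, abs_of_nonneg (sq_nonneg gt), sq_abs]
      _ ≤ 2 * |gt| * (8 * M) * f0 + gt ^ 2 * (4 * M) := by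
          gcongr <;> positivity
      _ = 16 * M * |gt| * f0 + 4 * M * gt ^ 2 := by ring
  have h2 : f0 ≤ s ^ 3 / sδ := by
    rw [le_div_iff₀ hsδpos, ← hs2]
    nlinarith
  have h3 : (1:ℝ) ≤ f0 / δ' := (one_le_div hδ).2 hf0
  have h4 : 16 * M * |gt| * f0 ≤ 16 * M * |gt| * (s ^ 3 / sδ) := by
    apply mul_le_mul_of_nonneg_left h2 (by positivity)
  have h5 : 4 * M * gt ^ 2 ≤ 4 * M * gt ^ 2 * (f0 / δ') := by
    have := mul_le_mul_of_nonneg_left h3 (show (0:ℝ) ≤ 4 * M * gt ^ 2 by positivity)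
    linarith
  linarith

/-- With `ψ_m(t) = (f_m(t;p) − f_m(t;p_0))²/f_m(t;p_0)`, `f_m(·;p_0) ≥ δ' > 0` and both
densities bounded by `M_0'`, there are constants `C₁, C₂` with
`|ψ'_m(t)| ≤ m² (C₁ √(ψ_m(t)) + C₂ ψ_m(t))` on `[0,1]`. -/
theorem psi_first_deriv_bound (δ' M0' : ℝ) (hδ : 0 < δ') :
    ∃ C₁ C₂ : ℝ, 0 < C₁ ∧ 0 < C₂ ∧
      ∀ (m : ℕ) (p p0 : Fin (m + 1) → ℝ),
        (∀ j, 0 ≤ p j) → (∑ j, p j = 1) → (∀ j, 0 ≤ p0 j) → (∑ j, p0 j = 1) →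
        (∀ t ∈ Set.Icc (0:ℝ) 1, δ' ≤ ∑ j : Fin (m + 1), p0 j * bePoly m (j : ℕ) t) →
        (∀ t ∈ Set.Icc (0:ℝ) 1, (∑ j : Fin (m + 1), p j * bePoly m (j : ℕ) t) ≤ M0') →
        (∀ t ∈ Set.Icc (0:ℝ) 1, (∑ j : Fin (m + 1), p0 j * bePoly m (j : ℕ) t) ≤ M0') →
        ∀ t ∈ Set.Icc (0:ℝ) 1,
          |deriv (fun s =>
              ((∑ j : Fin (m + 1), p j * bePoly m (j : ℕ) s) -
                ∑ j : Fin (m + 1), p0 j * bePoly m (j : ℕ) s) ^ 2 /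
                (∑ j : Fin (m + 1), p0 j * bePoly m (j : ℕ) s)) t| ≤
            (m : ℝ) ^ 2 *
              (C₁ * Real.sqrt (((∑ j : Fin (m + 1), p j * bePoly m (j : ℕ) t) -
                    ∑ j : Fin (m + 1), p0 j * bePoly m (j : ℕ) t) ^ 2 /
                    (∑ j : Fin (m + 1), p0 j * bePoly m (j : ℕ) t)) +
                C₂ * (((∑ j : Fin (m + 1), p j * bePoly m (j : ℕ) t) -
                    ∑ j : Fin (m + 1), p0 j * bePoly m (j : ℕ) t) ^ 2 /
                    (∑ j : Fin (m + 1), p0 j * bePoly m (j : ℕ) t))) := by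
  refine ⟨16 / Real.sqrt δ', 4 / δ', by positivity, by positivity, ?_⟩
  intro m p p0 hp hps hp0 hp0s hlow _ _ t ht
  obtain ⟨ht0, ht1⟩ := ht
  -- derivative values of bePoly at t
  set D : Fin (m+1) → ℝ := fun j =>
    ((m:ℝ)+1) * (m.choose (j:ℕ)) *
      (((j:ℕ):ℝ) * t^((j:ℕ)-1) * (1-t)^(m-(j:ℕ)) -
        ((m-(j:ℕ) : ℕ):ℝ) * t^(j:ℕ) * (1-t)^(m-(j:ℕ)-1)) with hD
  have hDb : ∀ j : Fin (m+1), |D j| ≤ 2 * m * (m + 1) :=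
    fun j => bePoly_deriv_bound m (j:ℕ) ht0 ht1
  -- derivative of weighted sums
  have hsum : ∀ q : Fin (m+1) → ℝ,
      HasDerivAt (fun s => ∑ j : Fin (m+1), q j * bePoly m (j:ℕ) s)
        (∑ j : Fin (m+1), q j * D j) t := by
    intro q
    apply HasDerivAt.fun_sum
    intro j _
    exact (bePoly_hasDerivAt m (j:ℕ) t).const_mul (q j)
  have hFd := hsum p
  have hF0d := hsum p0
  set F : ℝ → ℝ := fun s => ∑ j : Fin (m+1), p j * bePoly m (j:ℕ) s with hF
  set F0 : ℝ → ℝ := fun s => ∑ j : Fin (m+1), p0 j * bePoly m (j:ℕ) s with hF0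
  have hf0 : δ' ≤ F0 t := hlow t ⟨ht0, ht1⟩
  have hf0pos : 0 < F0 t := lt_of_lt_of_le hδ hf0
  -- bound a weighted-sum derivative by the ℓ¹ norm of weights
  have hwb : ∀ q : Fin (m+1) → ℝ,
      |∑ j : Fin (m+1), q j * D j| ≤ (∑ j : Fin (m+1), |q j|) * (2 * m * (m + 1)) := by
    intro q
    calc |∑ j : Fin (m+1), q j * D j| ≤ ∑ j : Fin (m+1), |q j * D j| :=
          Finset.abs_sum_le_sum_abs _ _
      _ ≤ ∑ j : Fin (m+1), |q j| * (2 * m * (m + 1)) := by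
          apply Finset.sum_le_sum
          intro j _
          rw [abs_mul]
          exact mul_le_mul_of_nonneg_left (hDb j) (abs_nonneg _)
      _ = (∑ j : Fin (m+1), |q j|) * (2 * m * (m + 1)) := by
          rw [← Finset.sum_mul]
  have h2m : (2:ℝ) * m * (m + 1) ≤ 4 * (m:ℝ)^2 := by
    rcases Nat.eq_zero_or_pos m with hm | hm
    · subst hm; norm_num
    · have : (1:ℝ) ≤ m := by exact_mod_cast hm
      nlinarith
  -- bound on |F' - F0'|
  have hg' : |(∑ j : Fin (m+1), p j * D j) - ∑ j : Fin (m+1), p0 j * D j| ≤ 8 * (m:ℝ)^2 := by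
    have h1 : (∑ j : Fin (m+1), p j * D j) - (∑ j : Fin (m+1), p0 j * D j)
        = ∑ j : Fin (m+1), (p j - p0 j) * D j := by
      rw [← Finset.sum_sub_distrib]; congr 1; funext j; ring
    rw [h1]
    refine le_trans (hwb _) ?_
    have hs : (∑ j : Fin (m+1), |p j - p0 j|) ≤ 2 := by
      calc (∑ j : Fin (m+1), |p j - p0 j|) ≤ ∑ j : Fin (m+1), (p j + p0 j) := by
            apply Finset.sum_le_sum
            intro j _
            rw [abs_sub_le_iff]
            constructor <;> [linarith [hp j, hp0 j]; linarith [hp j, hp0 j]]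
        _ = 2 := by rw [Finset.sum_add_distrib, hps, hp0s]; norm_num
    calc (∑ j : Fin (m+1), |p j - p0 j|) * (2 * m * (m + 1))
        ≤ 2 * (4 * (m:ℝ)^2) := by
          apply mul_le_mul hs h2m (by positivity) (by norm_num)
      _ = 8 * (m:ℝ)^2 := by ring
  have hf0' : |∑ j : Fin (m+1), p0 j * D j| ≤ 4 * (m:ℝ)^2 := by
    refine le_trans (hwb _) ?_
    have hs : (∑ j : Fin (m+1), |p0 j|) = 1 := by
      rw [← hp0s]; congr 1; funext j; exact abs_of_nonneg (hp0 j)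
    rw [hs, one_mul]; exact h2m
  -- derivative of ψ via quotient rule
  have hψ : HasDerivAt (fun s => (F s - F0 s) ^ 2 / F0 s)
      ((2 * (F t - F0 t) ^ 1 * ((∑ j : Fin (m+1), p j * D j) - ∑ j : Fin (m+1), p0 j * D j) *
          F0 t - (F t - F0 t) ^ 2 * ∑ j : Fin (m+1), p0 j * D j) / F0 t ^ 2) t := by
    exact ((hFd.sub hF0d).pow 2).div hF0d (ne_of_gt hf0pos)
  rw [hψ.deriv]
  have hfb := final_bound δ' (F0 t) (F t - F0 t)
    ((∑ j : Fin (m+1), p j * D j) - ∑ j : Fin (m+1), p0 j * D j)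
    (∑ j : Fin (m+1), p0 j * D j) ((m:ℝ)^2) hδ hf0 (by positivity) hg' hf0'
  calc |(2 * (F t - F0 t) ^ 1 * ((∑ j : Fin (m+1), p j * D j) - ∑ j : Fin (m+1), p0 j * D j) *
          F0 t - (F t - F0 t) ^ 2 * ∑ j : Fin (m+1), p0 j * D j) / F0 t ^ 2|
      = |(2 * (F t - F0 t) * ((∑ j : Fin (m+1), p j * D j) - ∑ j : Fin (m+1), p0 j * D j) *
          F0 t - (F t - F0 t) ^ 2 * ∑ j : Fin (m+1), p0 j * D j) / F0 t ^ 2| := by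
        norm_num
    _ ≤ (m:ℝ)^2 * (16 / Real.sqrt δ' * Real.sqrt ((F t - F0 t) ^ 2 / F0 t) +
          4 / δ' * ((F t - F0 t) ^ 2 / F0 t)) := hfb
end
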